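/- Let β > 1 be a Parry number, so that f_β(z) = -P*_{β,P}(z)/(1-z^{p+1}) is a rational function (nonsimple case) or f_β(z) = -P*_{β,P}(z) (simple case), where P*_{β,P} is the reciprocal of the Parry polynomial. In the factorization of the Parry polynomial P_{β,P}(X) into irreducible factors over ℚ, the minimal polynomial P_β(X) of β appears with multiplicity exactly one. -/

import Mathlib

/-- The beta-transformation `T_β : [0,1] → [0,1]`, `x ↦ {βx}`. -/
noncomputable def betaT (β : ℝ) : ℝ → ℝ := fun x => Int.fract (β * x)

/-- The digits `t_j = ⌊β · T_β^{j-1}(1)⌋` of the Rényi β-expansion of 1 (for `j ≥ 1`). -/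
noncomputable def betaDigit (β : ℝ) (j : ℕ) : ℤ := ⌊β * (betaT β)^[j - 1] 1⌋

/-- The polynomial `r_n(X) = X^n - t₁X^{n-1} - ⋯ - t_n` built from the digits of the
Rényi β-expansion of 1. -/
noncomputable def rpoly (β : ℝ) (n : ℕ) : Polynomial ℤ :=
  Polynomial.X ^ n - ∑ k ∈ Finset.Icc 1 n, Polynomial.C (betaDigit β k) * Polynomial.X ^ (n - k)

/-- `β` is a Parry number with Parry polynomial `P`: either `β` is a simple Parry number
(with `d_β(1)` of minimal length `m`, period parameter `p = 0`, `P = r_m`), or `β` is a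
nonsimple Parry number with preperiod length `m` and period length `p+1` (both minimal)
and `P = r_{m+p+1} - r_m` (for `m = 0` this is the purely periodic case `r_{p+1} - 1`). -/
def IsParryData (β : ℝ) (m p : ℕ) (P : Polynomial ℤ) : Prop :=
  ((betaT β)^[m] 1 = 0 ∧ (∀ m' : ℕ, (betaT β)^[m'] 1 = 0 → m ≤ m') ∧ p = 0 ∧
      P = rpoly β m) ∨
  ((∀ j : ℕ, (betaT β)^[j] 1 ≠ 0) ∧
      (betaT β)^[m + p + 1] 1 = (betaT β)^[m] 1 ∧
      (∀ m' p' : ℕ, (betaT β)^[m' + p' + 1] 1 = (betaT β)^[m'] 1 → m ≤ m' ∧ p ≤ p') ∧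
      P = rpoly β (m + p + 1) - rpoly β m)


/-!
Writing `T = betaT β`, the recursion `r_{n+1} = X r_n - t_{n+1}` together with
`t_{n+1} = ⌊β T^n(1)⌋` gives `r_n(β) = T^n(1)`, so `β` is a root of the Parry polynomial.
Differentiating the recursion gives `r_{n+1}'(β) = T^n(1) + β r_n'(β)`: as `T^n(1) ≥ 0` and
`β > 1`, the values `r_n'(β)` are nondecreasing in `n`, strictly at every `n` with
`T^n(1) ≠ 0`, and `r_1'(β) = 1`. Hence `P'(β) > 0` in both the simple and the nonsimple case,
so `β` is a simple root of `P`, which rules out `(minpoly ℚ β)^2 ∣ P`.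
-/

open Polynomial

theorem minpoly_dvd_and_not_sq_dvd_of_aeval_derivative_ne_zero {K A : Type*} [Field K]
    [CommRing A] [Algebra K A] {x : A} {P : K[X]} (hroot : aeval x P = 0)
    (hderiv : aeval x (derivative P) ≠ 0) :
    minpoly K x ∣ P ∧ ¬ minpoly K x ^ 2 ∣ P := by
  refine ⟨minpoly.dvd K x hroot, ?_⟩
  rintro ⟨c, rfl⟩
  apply hderiv
  simp [derivative_mul, derivative_pow, minpoly.aeval]

section Rpoly

variable (β : ℝ)

lemma rpoly_zero : rpoly β 0 = 1 := by
  simp [rpoly]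

lemma rpoly_succ (n : ℕ) : rpoly β (n + 1) = X * rpoly β n - C (betaDigit β (n + 1)) := by
  have hshift : ∀ k ∈ Finset.Icc 1 n,
      C (betaDigit β k) * X ^ (n + 1 - k) = X * (C (betaDigit β k) * X ^ (n - k)) := by
    intro k hk
    rw [show n + 1 - k = n - k + 1 by have := (Finset.mem_Icc.mp hk).2; omega, pow_succ]
    ring
  rw [rpoly, rpoly, Finset.sum_Icc_succ_top (by omega), Finset.sum_congr rfl hshift,
    ← Finset.mul_sum, Nat.sub_self, pow_zero, mul_one, pow_succ]
  ring

lemma betaT_iterate_one_nonneg (n : ℕ) : 0 ≤ (betaT β)^[n] 1 := by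
  cases n with
  | zero => exact zero_le_one
  | succ k => exact (Function.iterate_succ_apply' _ _ _).symm ▸ Int.fract_nonneg _

lemma aeval_rpoly (n : ℕ) : aeval β (rpoly β n) = (betaT β)^[n] 1 := by
  induction n with
  | zero => simp [rpoly_zero]
  | succ k ih =>
    rw [rpoly_succ, Function.iterate_succ_apply']
    simp only [map_sub, map_mul, aeval_X, ih, eq_intCast, map_intCast, betaDigit,
      Nat.add_sub_cancel, betaT]
    exact Int.self_sub_floor _

lemma aeval_derivative_rpoly_zero : aeval β (derivative (rpoly β 0)) = 0 := by
  simp [rpoly_zero]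

lemma aeval_derivative_rpoly_succ (n : ℕ) :
    aeval β (derivative (rpoly β (n + 1))) =
      (betaT β)^[n] 1 + β * aeval β (derivative (rpoly β n)) := by
  simp [rpoly_succ, derivative_mul, aeval_rpoly]

lemma aeval_derivative_rpoly_one : aeval β (derivative (rpoly β 1)) = 1 := by
  simp [aeval_derivative_rpoly_succ, aeval_derivative_rpoly_zero]

variable {β}

lemma aeval_derivative_rpoly_nonneg (hβ : 0 ≤ β) (n : ℕ) :
    0 ≤ aeval β (derivative (rpoly β n)) := by
  induction n with
  | zero => rw [aeval_derivative_rpoly_zero]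
  | succ k ih =>
    rw [aeval_derivative_rpoly_succ]
    have := betaT_iterate_one_nonneg β k
    positivity

lemma aeval_derivative_rpoly_le_succ (hβ : 1 ≤ β) (n : ℕ) :
    aeval β (derivative (rpoly β n)) + (betaT β)^[n] 1 ≤
      aeval β (derivative (rpoly β (n + 1))) := by
  rw [aeval_derivative_rpoly_succ]
  nlinarith [aeval_derivative_rpoly_nonneg (zero_le_one.trans hβ) n]

lemma monotone_aeval_derivative_rpoly (hβ : 1 ≤ β) :
    Monotone fun n => aeval β (derivative (rpoly β n)) :=
  monotone_nat_of_le_succ fun n => by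
    linarith [aeval_derivative_rpoly_le_succ hβ n, betaT_iterate_one_nonneg β n]

end Rpoly

section Parry

variable {β : ℝ} {m p : ℕ} {P : ℤ[X]}

lemma IsParryData.aeval_eq_zero (h : IsParryData β m p P) : aeval β P = 0 := by
  rcases h with ⟨hzero, -, -, rfl⟩ | ⟨-, hper, -, rfl⟩
  · rw [aeval_rpoly, hzero]
  · rw [map_sub, aeval_rpoly, aeval_rpoly, hper, sub_self]

lemma IsParryData.aeval_derivative_pos (hβ : 1 < β) (h : IsParryData β m p P) :
    0 < aeval β (derivative P) := by
  have hmono := monotone_aeval_derivative_rpoly hβ.le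
  rcases h with ⟨hzero, -, -, rfl⟩ | ⟨hne, -, -, rfl⟩
  · obtain ⟨k, rfl⟩ : ∃ k, m = k + 1 :=
      Nat.exists_eq_succ_of_ne_zero fun h => one_ne_zero (h ▸ hzero)
    calc (0 : ℝ) < aeval β (derivative (rpoly β 1)) := by
          rw [aeval_derivative_rpoly_one]; exact one_pos
      _ ≤ aeval β (derivative (rpoly β (k + 1))) := hmono (by omega)
  · have hstep := aeval_derivative_rpoly_le_succ hβ.le m
    have hpos : 0 < (betaT β)^[m] 1 := (betaT_iterate_one_nonneg β m).lt_of_ne' (hne m)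
    have hle : aeval β (derivative (rpoly β (m + 1))) ≤
        aeval β (derivative (rpoly β (m + p + 1))) := hmono (by omega)
    rw [derivative_sub, map_sub]
    linarith

end Parry

/-- In the factorization of the Parry polynomial of a Parry number `β` into irreducible
factors over `ℚ`, the minimal polynomial of `β` appears with multiplicity exactly one. -/
theorem stmt_14 (β : ℝ) (hβ : 1 < β) (m p : ℕ) (P : Polynomial ℤ)
    (hparry : IsParryData β m p P) :
    minpoly ℚ β ∣ P.map (Int.castRingHom ℚ) ∧
    ¬ (minpoly ℚ β) ^ 2 ∣ P.map (Int.castRingHom ℚ) := by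
  have hcast : Int.castRingHom ℚ = algebraMap ℤ ℚ := RingHom.ext_int _ _
  apply minpoly_dvd_and_not_sq_dvd_of_aeval_derivative_ne_zero
  · rw [hcast, aeval_map_algebraMap]
    exact hparry.aeval_eq_zero
  · rw [derivative_map, hcast, aeval_map_algebraMap]
    exact (hparry.aeval_derivative_pos hβ).ne'
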